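/- Let u_θ be an MLP with scalar input and output in which all hidden layers have the same width d (d₁ = ⋯ = d_L = d), with all biases equal to zero, and suppose the entries of the weight matrices W⁽¹⁾,…,W⁽ᴸ⁺¹⁾ are jointly independent square-integrable real random variables on a probability space, each with mean zero. Assume σ : ℝ → ℝ is differentiable with measurable derivative satisfying |σ'(t)| ≤ 1 for all t ∈ ℝ. Then for every fixed x ∈ ℝ, the random variable ω ↦ ∂u_θ/∂x (x) is integrable and has expectation zero: 𝔼[∂u_θ/∂x (x)] = 0. -/

import Mathlib

open Matrix MeasureTheory ProbabilityTheory

/-- The pre-activation values `u⁽ˡ⁺¹⁾(x)` of an MLP with scalar input,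
dimensions `d`, weights `W`, biases `b` and activation `σ`:
`u⁽¹⁾(x) = W⁽¹⁾ x + b⁽¹⁾` and `u⁽ˡ⁺¹⁾(x) = W⁽ˡ⁺¹⁾ σ(u⁽ˡ⁾(x)) + b⁽ˡ⁺¹⁾`.
Here `mlpPre d W b σ l` is `u⁽ˡ⁺¹⁾`, so `W l` is the weight matrix `W⁽ˡ⁺¹⁾`. -/
noncomputable def mlpPre (d : ℕ → ℕ)
    (W : (l : ℕ) → Matrix (Fin (d (l + 1))) (Fin (d l)) ℝ)
    (b : (l : ℕ) → Fin (d (l + 1)) → ℝ) (σ : ℝ → ℝ) :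
    (l : ℕ) → ℝ → Fin (d (l + 1)) → ℝ
  | 0, x => W 0 *ᵥ (fun _ => x) + b 0
  | l + 1, x => W (l + 1) *ᵥ (fun i => σ (mlpPre d W b σ l x i)) + b (l + 1)

/-!
Write `D⁽ˡ⁾ = ∂u⁽ˡ⁾/∂x`. The chain rule gives `D⁽¹⁾ = W⁽¹⁾ 𝟙` and
`D⁽ˡ⁺¹⁾ = W⁽ˡ⁺¹⁾ (σ'(u⁽ˡ⁾) ⊙ D⁽ˡ⁾)`. The vector `σ'(u⁽ˡ⁾) ⊙ D⁽ˡ⁾` is a function of the weights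
of layers `≤ l` only, hence independent of the entries of `W⁽ˡ⁺¹⁾`; as `|σ'| ≤ 1` it is
integrable once `D⁽ˡ⁾` is. So every entry of `D⁽ˡ⁺¹⁾` is a sum of products of two independent
integrable factors, the first of mean zero.
-/

/-- `mlpDeriv d W b σ x l` is `∂u⁽ˡ⁺¹⁾/∂x` at `x`, i.e. `D⁽ˡ⁺¹⁾`. -/
noncomputable def mlpDeriv (d : ℕ → ℕ)
    (W : (l : ℕ) → Matrix (Fin (d (l + 1))) (Fin (d l)) ℝ)
    (b : (l : ℕ) → Fin (d (l + 1)) → ℝ) (σ : ℝ → ℝ) (x : ℝ) :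
    (l : ℕ) → Fin (d (l + 1)) → ℝ
  | 0 => W 0 *ᵥ fun _ => 1
  | l + 1 => W (l + 1) *ᵥ fun j => deriv σ (mlpPre d W b σ l x j) * mlpDeriv d W b σ x l j

section Deterministic

variable {d : ℕ → ℕ} {σ : ℝ → ℝ}

theorem mlpPre_zero_apply (W : (l : ℕ) → Matrix (Fin (d (l + 1))) (Fin (d l)) ℝ)
    (b : (l : ℕ) → Fin (d (l + 1)) → ℝ) (t : ℝ) (i : Fin (d 1)) :
    mlpPre d W b σ 0 t i = ∑ j, W 0 i j * t + b 0 i := by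
  rw [mlpPre, Pi.add_apply, mulVec, dotProduct]

theorem mlpPre_succ_apply (W : (l : ℕ) → Matrix (Fin (d (l + 1))) (Fin (d l)) ℝ)
    (b : (l : ℕ) → Fin (d (l + 1)) → ℝ) (l : ℕ) (t : ℝ) (i : Fin (d (l + 2))) :
    mlpPre d W b σ (l + 1) t i = ∑ j, W (l + 1) i j * σ (mlpPre d W b σ l t j) + b (l + 1) i := by
  rw [mlpPre, Pi.add_apply, mulVec, dotProduct]

theorem hasDerivAt_mlpPre (hσ : Differentiable ℝ σ)
    (W : (l : ℕ) → Matrix (Fin (d (l + 1))) (Fin (d l)) ℝ)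
    (b : (l : ℕ) → Fin (d (l + 1)) → ℝ) (x : ℝ) :
    ∀ l i, HasDerivAt (fun t => mlpPre d W b σ l t i) (mlpDeriv d W b σ x l i) x
  | 0, i => by
    simp only [mlpPre_zero_apply, mlpDeriv, mulVec, dotProduct]
    exact (HasDerivAt.fun_sum fun j _ => (hasDerivAt_id x).const_mul (W 0 i j)).add_const _
  | l + 1, i => by
    simp only [mlpPre_succ_apply, mlpDeriv, mulVec, dotProduct]
    refine (HasDerivAt.fun_sum fun j _ => ?_).add_const _
    exact ((hσ _).hasDerivAt.comp x (hasDerivAt_mlpPre hσ W b x l j)).const_mul _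

variable {α : Type*} {mα : MeasurableSpace α}
  {V : (l : ℕ) → α → Matrix (Fin (d (l + 1))) (Fin (d l)) ℝ}

theorem measurable_mlpPre (hσ : Measurable σ) (b : (l : ℕ) → Fin (d (l + 1)) → ℝ) (x : ℝ) :
    ∀ l, (∀ l' ≤ l, ∀ i j, Measurable fun a => V l' a i j) →
      ∀ i, Measurable fun a => mlpPre d (fun l' => V l' a) b σ l x i
  | 0, hV, i => by
    simp only [mlpPre_zero_apply]
    exact (Finset.measurable_sum _ fun j _ => (hV 0 le_rfl i j).mul_const x).add_const _
  | l + 1, hV, i => by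
    simp only [mlpPre_succ_apply]
    have hprev := measurable_mlpPre hσ b x l fun l' hl' => hV l' (hl'.trans l.le_succ)
    exact (Finset.measurable_sum _ fun j _ =>
      (hV (l + 1) le_rfl i j).mul (hσ.comp (hprev j))).add_const _

theorem measurable_mlpDeriv (hσ : Measurable σ) (hσ' : Measurable (deriv σ))
    (b : (l : ℕ) → Fin (d (l + 1)) → ℝ) (x : ℝ) :
    ∀ l, (∀ l' ≤ l, ∀ i j, Measurable fun a => V l' a i j) →
      ∀ i, Measurable fun a => mlpDeriv d (fun l' => V l' a) b σ x l i
  | 0, hV, i => by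
    simp only [mlpDeriv, mulVec, dotProduct]
    exact Finset.measurable_sum _ fun j _ => (hV 0 le_rfl i j).mul_const 1
  | l + 1, hV, i => by
    simp only [mlpDeriv, mulVec, dotProduct]
    have hV' : ∀ l' ≤ l, ∀ i j, Measurable fun a => V l' a i j :=
      fun l' hl' => hV l' (hl'.trans l.le_succ)
    exact Finset.measurable_sum _ fun j _ => (hV (l + 1) le_rfl i j).mul
      ((hσ'.comp (measurable_mlpPre hσ b x l hV' j)).mul (measurable_mlpDeriv hσ hσ' b x l hV' j))

end Deterministic

namespace ProbabilityTheory

variable {Ω ι : Type*} {mΩ : MeasurableSpace Ω} {μ : Measure Ω} {β : ι → Type*}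
  {mβ : ∀ i, MeasurableSpace (β i)} {X : ∀ i, Ω → β i}

theorem measurable_iSup_comap {S : Set ι} {i : ι} (hi : i ∈ S) :
    Measurable[⨆ j ∈ S, (mβ j).comap (X j)] (X i) :=
  (comap_measurable (X i)).mono (le_iSup₂ (f := fun j (_ : j ∈ S) => (mβ j).comap (X j)) i hi)
    le_rfl

theorem iIndepFun.indepFun_of_measurable_iSup {γ δ : Type*} [MeasurableSpace γ]
    [MeasurableSpace δ] (hX : iIndepFun X μ) (hXmeas : ∀ i, Measurable (X i)) {S T : Set ι}
    (hST : Disjoint S T) {f : Ω → γ} {g : Ω → δ}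
    (hf : Measurable[⨆ i ∈ S, (mβ i).comap (X i)] f)
    (hg : Measurable[⨆ i ∈ T, (mβ i).comap (X i)] g) :
    IndepFun f g μ := by
  rw [IndepFun_iff_Indep]
  exact indep_of_indep_of_le_right (indep_of_indep_of_le_left
    (indep_iSup_of_disjoint (fun i => (hXmeas i).comap_le) hX hST) hf.comap_le) hg.comap_le

end ProbabilityTheory

section RandomWeights

variable {Ω : Type*} {mΩ : MeasurableSpace Ω} {μ : Measure Ω} {L : ℕ} {d : ℕ → ℕ}
  {W : (l : ℕ) → Ω → Matrix (Fin (d (l + 1))) (Fin (d l)) ℝ} {σ : ℝ → ℝ}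
  (b : (l : ℕ) → Fin (d (l + 1)) → ℝ) (x : ℝ)

theorem integrable_finset_sum_and_integral_eq_zero {ι : Type*} (s : Finset ι) {f : ι → Ω → ℝ}
    (hf : ∀ i ∈ s, Integrable (f i) μ ∧ ∫ ω, f i ω ∂μ = 0) :
    Integrable (fun ω => ∑ i ∈ s, f i ω) μ ∧ ∫ ω, ∑ i ∈ s, f i ω ∂μ = 0 := by
  refine ⟨integrable_finsetSum s fun i hi => (hf i hi).1, ?_⟩
  rw [integral_finsetSum s fun i hi => (hf i hi).1]
  exact Finset.sum_eq_zero fun i hi => (hf i hi).2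

theorem indepFun_weight_mlpDeriv
    (hWmeas : ∀ l ≤ L, ∀ i j, Measurable fun ω => W l ω i j)
    (hWindep : iIndepFun
      (fun p : (l : Fin (L + 1)) × (Fin (d (l.1 + 1)) × Fin (d l.1)) =>
        fun ω => W p.1 ω p.2.1 p.2.2) μ)
    (hσ : Measurable σ) (hσ' : Measurable (deriv σ)) {l : ℕ} (hl : l + 1 ≤ L)
    (k : Fin (d (l + 2))) (j : Fin (d (l + 1))) :
    IndepFun (fun ω => W (l + 1) ω k j)
      (fun ω => deriv σ (mlpPre d (fun l' => W l' ω) b σ l x j) *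
        mlpDeriv d (fun l' => W l' ω) b σ x l j) μ := by
  let entry (p : (l : Fin (L + 1)) × (Fin (d (l.1 + 1)) × Fin (d l.1))) (ω : Ω) : ℝ :=
    W p.1 ω p.2.1 p.2.2
  refine hWindep.indepFun_of_measurable_iSup (fun p => hWmeas _ (Nat.lt_succ_iff.mp p.1.2) _ _)
    (S := {p | l < p.1.1}) (T := {p | p.1.1 ≤ l})
    (Set.disjoint_left.2 fun _ hS hT => (show _ ≤ l from hT).not_gt hS) ?_ ?_
  · exact measurable_iSup_comap (X := entry) (i := ⟨⟨l + 1, by omega⟩, (k, j)⟩) l.lt_succ_self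
  · refine (hσ'.comp (measurable_mlpPre hσ b x l ?_ j)).mul
      (measurable_mlpDeriv hσ hσ' b x l ?_ j)
    all_goals
      intro l' hl' i' j'
      exact measurable_iSup_comap (X := entry) (i := ⟨⟨l', by omega⟩, (i', j')⟩) hl'

theorem integrable_mlpDeriv_and_integral_eq_zero
    (hWmeas : ∀ l ≤ L, ∀ i j, Measurable fun ω => W l ω i j)
    (hWint : ∀ l ≤ L, ∀ i j, Integrable (fun ω => W l ω i j) μ)
    (hWindep : iIndepFun
      (fun p : (l : Fin (L + 1)) × (Fin (d (l.1 + 1)) × Fin (d l.1)) =>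
        fun ω => W p.1 ω p.2.1 p.2.2) μ)
    (hWmean : ∀ l ≤ L, ∀ i j, ∫ ω, W l ω i j ∂μ = 0)
    (hσ : Measurable σ) (hσ' : Measurable (deriv σ)) (hσbound : ∀ t, |deriv σ t| ≤ 1) :
    ∀ l ≤ L, ∀ k, Integrable (fun ω => mlpDeriv d (fun l' => W l' ω) b σ x l k) μ ∧
      ∫ ω, mlpDeriv d (fun l' => W l' ω) b σ x l k ∂μ = 0
  | 0, hL, k => by
    simp only [mlpDeriv, mulVec, dotProduct, mul_one]
    exact integrable_finset_sum_and_integral_eq_zero _ fun j _ =>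
      ⟨hWint 0 hL k j, hWmean 0 hL k j⟩
  | l + 1, hl, k => by
    simp only [mlpDeriv, mulVec, dotProduct]
    refine integrable_finset_sum_and_integral_eq_zero _ fun j _ => ?_
    have hlower : ∀ l' ≤ l, ∀ i j, Measurable fun ω => W l' ω i j :=
      fun l' hl' => hWmeas l' (by omega)
    have hD := (integrable_mlpDeriv_and_integral_eq_zero hWmeas hWint hWindep hWmean hσ hσ'
      hσbound l (by omega) j).1
    have hG : Integrable (fun ω => deriv σ (mlpPre d (fun l' => W l' ω) b σ l x j) *
        mlpDeriv d (fun l' => W l' ω) b σ x l j) μ :=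
      hD.bdd_mul (hσ'.comp (measurable_mlpPre hσ b x l hlower j)).aestronglyMeasurable
        (.of_forall fun ω => (Real.norm_eq_abs _).trans_le (hσbound _))
    have hindep := indepFun_weight_mlpDeriv b x hWmeas hWindep hσ hσ' hl k j
    refine ⟨hindep.integrable_mul (hWint _ hl k j) hG, ?_⟩
    rw [hindep.integral_fun_mul_eq_mul_integral (hWint _ hl k j).aestronglyMeasurable
      hG.aestronglyMeasurable, hWmean _ hl k j, zero_mul]

end RandomWeights

theorem expectation_mlp_deriv_eq_zero_general
    {Ω : Type*} [MeasurableSpace Ω] (μ : Measure Ω) [IsProbabilityMeasure μ]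
    (L : ℕ)
    (d : ℕ → ℕ)
    (W : (l : ℕ) → Ω → Matrix (Fin (d (l + 1))) (Fin (d l)) ℝ)
    (hWmeas : ∀ l i j, Measurable fun ω => W l ω i j)
    (hWL2 : ∀ l i j, MemLp (fun ω => W l ω i j) 2 μ)
    (hWindep : iIndepFun
      (fun p : (l : Fin (L + 1)) × (Fin (d (l.1 + 1)) × Fin (d l.1)) =>
        fun ω => W p.1 ω p.2.1 p.2.2) μ)
    (hWmean : ∀ l, l ≤ L → ∀ i j, ∫ ω, W l ω i j ∂μ = 0)
    (σ : ℝ → ℝ) (hσ : Differentiable ℝ σ)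
    (hσ' : Measurable (deriv σ)) (hσbound : ∀ t, |deriv σ t| ≤ 1)
    (x : ℝ) (i : Fin (d (L + 1))) :
    Integrable (fun ω =>
      deriv (fun t => mlpPre d (fun l => W l ω) (fun _ => 0) σ L t i) x) μ ∧
    ∫ ω, deriv (fun t => mlpPre d (fun l => W l ω) (fun _ => 0) σ L t i) x ∂μ = 0 := by
  simp only [fun ω => (hasDerivAt_mlpPre hσ (fun l => W l ω) (fun _ => 0) x L i).deriv]
  exact integrable_mlpDeriv_and_integral_eq_zero (fun _ => 0) x (fun l _ => hWmeas l)
    (fun l _ i j => (hWL2 l i j).integrable one_le_two) hWindep hWmean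
    hσ.continuous.measurable hσ' hσbound L le_rfl i

/-- For a randomly initialized MLP with scalar input and output,
hidden widths all equal to `m`, zero biases, jointly independent mean-zero
square-integrable weight entries, and a differentiable activation `σ` with measurable
derivative bounded by `1`, the random variable `ω ↦ ∂u_θ/∂x (x)` is integrable and has
expectation zero. -/
theorem expectation_mlp_deriv_eq_zero
    {Ω : Type*} [MeasurableSpace Ω] (μ : Measure Ω) [IsProbabilityMeasure μ]
    (L m : ℕ) (hL : 1 ≤ L) (hm : 1 ≤ m)
    (d : ℕ → ℕ) (h0 : d 0 = 1) (hdL : d (L + 1) = 1)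
    (hdm : ∀ l, 1 ≤ l → l ≤ L → d l = m)
    (W : (l : ℕ) → Ω → Matrix (Fin (d (l + 1))) (Fin (d l)) ℝ)
    (hWmeas : ∀ l i j, Measurable fun ω => W l ω i j)
    (hWL2 : ∀ l i j, MemLp (fun ω => W l ω i j) 2 μ)
    (hWindep : iIndepFun
      (fun p : (l : Fin (L + 1)) × (Fin (d (l.1 + 1)) × Fin (d l.1)) =>
        fun ω => W p.1 ω p.2.1 p.2.2) μ)
    (hWmean : ∀ l, l ≤ L → ∀ i j, ∫ ω, W l ω i j ∂μ = 0)
    (σ : ℝ → ℝ) (hσ : Differentiable ℝ σ)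
    (hσ' : Measurable (deriv σ)) (hσbound : ∀ t, |deriv σ t| ≤ 1)
    (x : ℝ) (i : Fin (d (L + 1))) :
    Integrable (fun ω =>
      deriv (fun t => mlpPre d (fun l => W l ω) (fun _ => 0) σ L t i) x) μ ∧
    ∫ ω, deriv (fun t => mlpPre d (fun l => W l ω) (fun _ => 0) σ L t i) x ∂μ = 0 :=
  expectation_mlp_deriv_eq_zero_general μ L d W hWmeas hWL2 hWindep hWmean σ hσ hσ' hσbound x i
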